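/- Let α, ω₁, ω₂ be the three (pairwise distinct) complex roots of x³ - x² - x - 1 = 0. Then for every natural number n, H_n = ((3ω₁ω₂ + 2)·αⁿ)/((α - ω₁)(α - ω₂)) - ((3αω₂ + 2)·ω₁ⁿ)/((α - ω₁)(ω₁ - ω₂)) + ((3αω₁ + 2)·ω₂ⁿ)/((α - ω₂)(ω₁ - ω₂)). -/
import Mathlib


/-- The generalized Tribonacci sequence. -/
def genTrib : ℕ → ℤ
  | 0 => 3
  | 1 => 0
  | 2 => 2
  | n + 3 => genTrib (n + 2) + genTrib (n + 1) + genTrib n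

theorem genTrib_binet (α ω₁ ω₂ : ℂ)
    (hne₁ : α ≠ ω₁) (hne₂ : α ≠ ω₂) (hne₃ : ω₁ ≠ ω₂)
    (hroots : ∀ x : ℂ, x ^ 3 - x ^ 2 - x - 1 = (x - α) * (x - ω₁) * (x - ω₂)) (n : ℕ) :
    (genTrib n : ℂ) =
      (3 * ω₁ * ω₂ + 2) * α ^ n / ((α - ω₁) * (α - ω₂)) -
        (3 * α * ω₂ + 2) * ω₁ ^ n / ((α - ω₁) * (ω₁ - ω₂)) +
        (3 * α * ω₁ + 2) * ω₂ ^ n / ((α - ω₂) * (ω₁ - ω₂)) := by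
  have d1 : α - ω₁ ≠ 0 := sub_ne_zero.mpr hne₁
  have d2 : α - ω₂ ≠ 0 := sub_ne_zero.mpr hne₂
  have d3 : ω₁ - ω₂ ≠ 0 := sub_ne_zero.mpr hne₃
  have hα : α ^ 3 - α ^ 2 - α - 1 = 0 := by linear_combination hroots α
  have hω₁ : ω₁ ^ 3 - ω₁ ^ 2 - ω₁ - 1 = 0 := by linear_combination hroots ω₁
  have hω₂ : ω₂ ^ 3 - ω₂ ^ 2 - ω₂ - 1 = 0 := by linear_combination hroots ω₂
  induction n using Nat.strong_induction_on with
  | _ n ih =>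
    match n with
    | 0 =>
      simp only [genTrib, pow_zero]
      field_simp
      ring
    | 1 =>
      simp only [genTrib, pow_one]
      push_cast
      field_simp
      ring
    | 2 =>
      simp only [genTrib]
      push_cast
      field_simp
      ring
    | (m + 3) =>
      have i1 := ih (m + 2) (by omega)
      have i2 := ih (m + 1) (by omega)
      have i3 := ih m (by omega)
      rw [genTrib]
      push_cast
      rw [i1, i2, i3]
      linear_combination (-(3 * ω₁ * ω₂ + 2) * α ^ m / ((α - ω₁) * (α - ω₂))) * hα +
        ((3 * α * ω₂ + 2) * ω₁ ^ m / ((α - ω₁) * (ω₁ - ω₂))) * hω₁ -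
        ((3 * α * ω₁ + 2) * ω₂ ^ m / ((α - ω₂) * (ω₁ - ω₂))) * hω₂
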